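/- Let f be a nonzero formal power series in ℂ[[x₁,…,xₙ]] and let w ∈ U_loc be a local weight vector. Then the minimum of w·α over α ∈ Supp(f) is attained at two or more distinct elements of Supp(f) if and only if the minimum of w·β over β ∈ E_w(f) is attained at two or more distinct elements of E_w(f). (In particular, the local tropical hypersurface of f decomposes over the strata of U_loc as the union of the loci determined by the sets E_w(f).) -/

import Mathlib

/-- The support of a multivariate formal power series. -/
def Supp {n : ℕ} (f : MvPowerSeries (Fin n) ℂ) : Set (Fin n →₀ ℕ) :=
  {α | MvPowerSeries.coeff α f ≠ 0}

/-- The `w`-weight of an exponent vector `α`, namely `w·α = Σᵢ wᵢ αᵢ`. -/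
def wt {n : ℕ} (w : Fin n → ℝ) (α : Fin n →₀ ℕ) : ℝ :=
  ∑ i, w i * (α i : ℝ)

/-- The projection `π_P : ℕⁿ → ℕ^{P(w)}` onto the coordinates in the positivity set
`P(w) = {i : wᵢ > 0}` of the local weight vector `w`. -/
def projP {n : ℕ} (w : Fin n → ℝ) (α : Fin n →₀ ℕ) : {i : Fin n // 0 < w i} → ℕ :=
  fun i => α i.1

/-- `E_w(f) = {α ∈ Supp f : π_P(α) is a minimal element of π_P(Supp f)}`, with respect to
the componentwise partial order. -/
def Ew {n : ℕ} (w : Fin n → ℝ) (f : MvPowerSeries (Fin n) ℂ) : Set (Fin n →₀ ℕ) :=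
  {α ∈ Supp f | ∀ β ∈ Supp f, projP w β ≤ projP w α → projP w β = projP w α}

/-- The minimum of `w·α` over `α ∈ S` is attained at two or more distinct elements of `S`. -/
def MinAttainedTwice {n : ℕ} (w : Fin n → ℝ) (S : Set (Fin n →₀ ℕ)) : Prop :=
  ∃ a ∈ S, ∃ b ∈ S, a ≠ b ∧ wt w a = wt w b ∧ ∀ c ∈ S, wt w a ≤ wt w c

/- For `w ≥ 0` the weight `wt w` is strictly monotone along the componentwise order of `projP w`:
coordinates with `wᵢ = 0` do not contribute and the others contribute positively. Hence the
`wt w`-minimizers on `Supp f` lie in `E_w(f)`, and by well-foundedness of the componentwise order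
on `ℕ^{P(w)}` every point of `Supp f` dominates a point of `E_w(f)` of no larger weight. -/

section Weight

variable {n : ℕ} {w : Fin n → ℝ} {α β : Fin n →₀ ℕ}

lemma mul_le_mul_of_projP_le (hw : ∀ i, 0 ≤ w i) (h : projP w β ≤ projP w α) (i : Fin n) :
    w i * (β i : ℝ) ≤ w i * (α i : ℝ) := by
  rcases (hw i).lt_or_eq with hi | hi
  · exact mul_le_mul_of_nonneg_left (Nat.cast_le.2 (h ⟨i, hi⟩)) (hw i)
  · simp [← hi]

lemma wt_le_wt_of_projP_le (hw : ∀ i, 0 ≤ w i) (h : projP w β ≤ projP w α) :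
    wt w β ≤ wt w α :=
  Finset.sum_le_sum fun i _ => mul_le_mul_of_projP_le hw h i

lemma wt_lt_wt_of_projP_lt (hw : ∀ i, 0 ≤ w i) (h : projP w β < projP w α) :
    wt w β < wt w α := by
  obtain ⟨hle, j, hj⟩ := Pi.lt_def.1 h
  refine Finset.sum_lt_sum (fun i _ => mul_le_mul_of_projP_le hw hle i)
    ⟨j.1, Finset.mem_univ _, ?_⟩
  exact mul_lt_mul_of_pos_left (Nat.cast_lt.2 hj) j.2

end Weight

section Ew

variable {n : ℕ} {w : Fin n → ℝ} {f : MvPowerSeries (Fin n) ℂ}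

lemma mem_Ew_iff_minimalFor {α : Fin n →₀ ℕ} :
    α ∈ Ew w f ↔ MinimalFor (· ∈ Supp f) (projP w) α := by
  refine and_congr_right fun _ => forall₂_congr fun β _ => ?_
  exact ⟨fun h hle => (h hle).ge, fun h hle => le_antisymm hle (h hle)⟩

lemma mem_Ew_of_forall_wt_le (hw : ∀ i, 0 ≤ w i) {α : Fin n →₀ ℕ} (hα : α ∈ Supp f)
    (hmin : ∀ γ ∈ Supp f, wt w α ≤ wt w γ) : α ∈ Ew w f :=
  mem_Ew_iff_minimalFor.2 ⟨hα, fun γ hγ hle =>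
    by_contra fun hge => (wt_lt_wt_of_projP_lt hw (lt_of_le_not_ge hle hge)).not_ge (hmin γ hγ)⟩

lemma exists_mem_Ew_projP_le {α : Fin n →₀ ℕ} (hα : α ∈ Supp f) :
    ∃ e ∈ Ew w f, projP w e ≤ projP w α := by
  obtain ⟨e, ⟨he, heα⟩, hmin⟩ := exists_minimalFor_of_wellFoundedLT
    (fun β => β ∈ Supp f ∧ projP w β ≤ projP w α) (projP w) ⟨α, hα, le_rfl⟩
  refine ⟨e, mem_Ew_iff_minimalFor.2 ⟨he, fun γ hγ hle => ?_⟩, heα⟩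
  exact hmin ⟨hγ, hle.trans heα⟩ hle

end Ew

lemma minAttainedTwice_iff_of_subset {n : ℕ} {w : Fin n → ℝ} {S T : Set (Fin n →₀ ℕ)}
    (hTS : T ⊆ S) (hmin : ∀ a ∈ S, (∀ c ∈ S, wt w a ≤ wt w c) → a ∈ T)
    (hdom : ∀ c ∈ S, ∃ e ∈ T, wt w e ≤ wt w c) :
    MinAttainedTwice w S ↔ MinAttainedTwice w T := by
  constructor
  · rintro ⟨a, ha, b, hb, hab, heq, haS⟩
    have hbS : ∀ c ∈ S, wt w b ≤ wt w c := heq ▸ haS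
    exact ⟨a, hmin a ha haS, b, hmin b hb hbS, hab, heq, fun c hc => haS c (hTS hc)⟩
  · rintro ⟨a, ha, b, hb, hab, heq, haT⟩
    refine ⟨a, hTS ha, b, hTS hb, hab, heq, fun c hc => ?_⟩
    obtain ⟨e, he, hec⟩ := hdom c hc
    exact (haT e he).trans hec

theorem minAttainedTwice_supp_iff_Ew_general
    (n : ℕ) (f : MvPowerSeries (Fin n) ℂ)
    (w : Fin n → ℝ) (hw : ∀ i, 0 ≤ w i) :
    MinAttainedTwice w (Supp f) ↔ MinAttainedTwice w (Ew w f) := by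
  refine minAttainedTwice_iff_of_subset (fun _ h => h.1)
    (fun _ => mem_Ew_of_forall_wt_le hw) fun c hc => ?_
  obtain ⟨e, he, hle⟩ := exists_mem_Ew_projP_le hc
  exact ⟨e, he, wt_le_wt_of_projP_le hw hle⟩

/-- For a nonzero `f ∈ ℂ[[x₁,…,xₙ]]` and a local weight vector `w ∈ U_loc`: the minimum of
`w·α` over `Supp f` is attained at two or more distinct elements of `Supp f` iff the
minimum of `w·β` over `E_w(f)` is attained at two or more distinct elements of `E_w(f)`. -/
theorem minAttainedTwice_supp_iff_Ew
    (n : ℕ) (hn : 1 ≤ n) (f : MvPowerSeries (Fin n) ℂ) (hf : f ≠ 0)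
    (w : Fin n → ℝ) (hw : ∀ i, 0 ≤ w i) :
    MinAttainedTwice w (Supp f) ↔ MinAttainedTwice w (Ew w f) :=
  minAttainedTwice_supp_iff_Ew_general n f w hw
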